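/- The Euler arctangent series holds: for every real r, arctan(r) = (r/(1+r²)) · Σ_{k=0}^∞ ((2k)!!/(2k+1)!!) · (r²/(1+r²))^k. -/

import Mathlib

open Real

/-- (2k)!! = 2^k k! -/
noncomputable def evenDF (k : ℕ) : ℝ := 2 ^ k * k.factorial

/-- (2k+1)!! = (2k+1)!/(2^k k!) -/
noncomputable def oddDF (k : ℕ) : ℝ := (2 * k + 1).factorial / (2 ^ k * k.factorial)

/-!
Write `c k = (2k)!!/(2k+1)!!`, so that `c (k+1) = (2k+2)/(2k+3) · c k` and `c k ≤ 1`. The term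
`t k y = c k · y^(2k+1)/(1+y²)^(k+1)` has derivative `D k y - D (k+1) y`, where
`D k y = (2k+1) · c k · (y²/(1+y²))^k/(1+y²)` and `D 0 = arctan'`. Hence the remainder
`arctan - ∑_{k<n} t k` vanishes at `0` and has derivative `D n`, which is bounded by
`(2n+1)(r²/(1+r²))^n` between `0` and `r`; by the mean value theorem the remainder at `r` tends
to `0`.
-/

open Filter Topology Finset

lemma evenDF_zero : evenDF 0 = 1 := by simp [evenDF]

lemma oddDF_zero : oddDF 0 = 1 := by simp [oddDF]

lemma evenDF_pos (k : ℕ) : 0 < evenDF k := by unfold evenDF; positivity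

lemma oddDF_pos (k : ℕ) : 0 < oddDF k := by unfold oddDF; positivity

lemma evenDF_succ (k : ℕ) : evenDF (k + 1) = (2 * k + 2) * evenDF k := by
  simp only [evenDF, Nat.factorial_succ]
  push_cast
  ring

lemma oddDF_succ (k : ℕ) : oddDF (k + 1) = (2 * k + 3) * oddDF k := by
  simp only [oddDF, show 2 * (k + 1) + 1 = 2 * k + 1 + 1 + 1 by ring, Nat.factorial_succ]
  push_cast
  field_simp
  ring

noncomputable def eulerCoeff (k : ℕ) : ℝ := evenDF k / oddDF k

lemma eulerCoeff_zero : eulerCoeff 0 = 1 := by simp [eulerCoeff, evenDF_zero, oddDF_zero]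

lemma eulerCoeff_pos (k : ℕ) : 0 < eulerCoeff k := div_pos (evenDF_pos k) (oddDF_pos k)

lemma eulerCoeff_succ (k : ℕ) :
    eulerCoeff (k + 1) = (2 * k + 2) / (2 * k + 3) * eulerCoeff k := by
  simp only [eulerCoeff, evenDF_succ, oddDF_succ]
  rw [mul_div_mul_comm]

lemma eulerCoeff_le_one (k : ℕ) : eulerCoeff k ≤ 1 := by
  induction k with
  | zero => rw [eulerCoeff_zero]
  | succ k ih =>
    rw [eulerCoeff_succ]
    have : (2 * k + 2) / (2 * k + 3) ≤ (1 : ℝ) := by rw [div_le_one (by positivity)]; linarith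
    exact mul_le_one₀ this (eulerCoeff_pos k).le ih

lemma sq_div_one_add_sq_nonneg (x : ℝ) : 0 ≤ x ^ 2 / (1 + x ^ 2) := by positivity

lemma sq_div_one_add_sq_lt_one (x : ℝ) : x ^ 2 / (1 + x ^ 2) < 1 := by
  rw [div_lt_one (by positivity)]
  linarith

lemma sq_div_one_add_sq_le {x r : ℝ} (h : x ^ 2 ≤ r ^ 2) :
    x ^ 2 / (1 + x ^ 2) ≤ r ^ 2 / (1 + r ^ 2) := by
  rw [div_le_div_iff₀ (by positivity) (by positivity)]
  nlinarith

noncomputable def eulerTerm (k : ℕ) (y : ℝ) : ℝ :=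
  eulerCoeff k * y ^ (2 * k + 1) / (1 + y ^ 2) ^ (k + 1)

lemma eulerTerm_eq (k : ℕ) (y : ℝ) :
    eulerTerm k y = y / (1 + y ^ 2) * (eulerCoeff k * (y ^ 2 / (1 + y ^ 2)) ^ k) := by
  have : 1 + y ^ 2 ≠ 0 := by positivity
  rw [eulerTerm, div_pow, ← pow_mul]
  field_simp
  ring

noncomputable def eulerRemainder (n : ℕ) (y : ℝ) : ℝ := arctan y - ∑ k ∈ range n, eulerTerm k y

noncomputable def eulerRemainderDeriv (n : ℕ) (x : ℝ) : ℝ :=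
  (2 * n + 1) * eulerCoeff n * (x ^ 2 / (1 + x ^ 2)) ^ n / (1 + x ^ 2)

lemma hasDerivAt_eulerTerm (k : ℕ) (x : ℝ) :
    HasDerivAt (eulerTerm k) (eulerRemainderDeriv k x - eulerRemainderDeriv (k + 1) x) x := by
  have hne : 1 + x ^ 2 ≠ 0 := by positivity
  have hnum := (hasDerivAt_pow (2 * k + 1) x).const_mul (eulerCoeff k)
  have hden := ((hasDerivAt_pow 2 x).const_add 1).pow (k + 1)
  refine (hnum.div hden (pow_ne_zero _ hne)).congr_deriv ?_
  simp only [eulerRemainderDeriv, eulerCoeff_succ, div_pow, ← pow_mul, Pi.pow_apply,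
    Nat.add_sub_cancel]
  push_cast
  field_simp
  ring

lemma hasDerivAt_eulerRemainder (n : ℕ) (x : ℝ) :
    HasDerivAt (eulerRemainder n) (eulerRemainderDeriv n x) x := by
  have hsum := HasDerivAt.fun_sum (u := range n) (fun k _ => hasDerivAt_eulerTerm k x)
  rw [sum_range_sub'] at hsum
  refine ((hasDerivAt_arctan x).sub hsum).congr_deriv ?_
  simp [eulerRemainderDeriv, eulerCoeff_zero]

lemma abs_eulerRemainderDeriv_le (n : ℕ) {x r : ℝ} (h : x ^ 2 ≤ r ^ 2) :
    |eulerRemainderDeriv n x| ≤ (2 * n + 1) * (r ^ 2 / (1 + r ^ 2)) ^ n := by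
  have hc := eulerCoeff_pos n
  have hx := sq_div_one_add_sq_nonneg x
  rw [eulerRemainderDeriv, abs_of_nonneg (by positivity)]
  calc (2 * n + 1) * eulerCoeff n * (x ^ 2 / (1 + x ^ 2)) ^ n / (1 + x ^ 2)
      ≤ (2 * n + 1) * eulerCoeff n * (x ^ 2 / (1 + x ^ 2)) ^ n :=
        div_le_self (by positivity) (le_add_of_nonneg_right (sq_nonneg x))
    _ ≤ (2 * n + 1) * 1 * (r ^ 2 / (1 + r ^ 2)) ^ n := by
        gcongr (2 * (n : ℝ) + 1) * ?_ * ?_ ^ n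
        · exact eulerCoeff_le_one n
        · exact sq_div_one_add_sq_le h
    _ = (2 * n + 1) * (r ^ 2 / (1 + r ^ 2)) ^ n := by rw [mul_one]

lemma abs_eulerRemainder_le (n : ℕ) (r : ℝ) :
    |eulerRemainder n r| ≤ (2 * n + 1) * (r ^ 2 / (1 + r ^ 2)) ^ n * |r| := by
  have hsq : ∀ x ∈ Set.uIcc 0 r, x ^ 2 ≤ r ^ 2 := fun x hx => by
    rcases Set.mem_uIcc.1 hx with ⟨h₁, h₂⟩ | ⟨h₁, h₂⟩ <;> nlinarith
  have := Convex.norm_image_sub_le_of_norm_hasDerivWithin_le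
    (fun x _ => (hasDerivAt_eulerRemainder n x).hasDerivWithinAt)
    (fun x hx => abs_eulerRemainderDeriv_le n (hsq x hx)) (convex_uIcc 0 r)
    Set.left_mem_uIcc Set.right_mem_uIcc
  simpa [eulerRemainder, eulerTerm] using this

lemma tendsto_sum_eulerTerm (r : ℝ) :
    Tendsto (fun n => ∑ k ∈ range n, eulerTerm k r) atTop (𝓝 (arctan r)) := by
  have h₀ := sq_div_one_add_sq_nonneg r
  have h₁ := sq_div_one_add_sq_lt_one r
  have hbound : Tendsto (fun n : ℕ => (2 * n + 1) * (r ^ 2 / (1 + r ^ 2)) ^ n * |r|)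
      atTop (𝓝 0) := by
    have := ((tendsto_self_mul_const_pow_of_lt_one h₀ h₁).const_mul 2).add
      (tendsto_pow_atTop_nhds_zero_of_lt_one h₀ h₁)
    simpa [add_mul, mul_assoc] using this.mul_const |r|
  rw [tendsto_iff_dist_tendsto_zero]
  refine squeeze_zero (fun n => dist_nonneg) (fun n => ?_) hbound
  rw [dist_comm, Real.dist_eq]
  exact abs_eulerRemainder_le n r

theorem euler_arctan_series (r : ℝ) :
    Real.arctan r =
      (r / (1 + r ^ 2)) *
        ∑' k : ℕ, (evenDF k / oddDF k) * (r ^ 2 / (1 + r ^ 2)) ^ k := by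
  have hs : Summable (fun k => eulerCoeff k * (r ^ 2 / (1 + r ^ 2)) ^ k) := by
    have h₀ := sq_div_one_add_sq_nonneg r
    refine (summable_geometric_of_lt_one h₀ (sq_div_one_add_sq_lt_one r)).of_nonneg_of_le
      (fun k => mul_nonneg (eulerCoeff_pos k).le (pow_nonneg h₀ k))
      (fun k => mul_le_of_le_one_left (pow_nonneg h₀ k) (eulerCoeff_le_one k))
  have hsum : HasSum (fun k => r / (1 + r ^ 2) * (eulerCoeff k * (r ^ 2 / (1 + r ^ 2)) ^ k))
      (arctan r) := by
    rw [(hs.mul_left _).hasSum_iff_tendsto_nat]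
    simpa only [eulerTerm_eq] using tendsto_sum_eulerTerm r
  rw [← hsum.tsum_eq, tsum_mul_left]
  rfl
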